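/- For all a, b > 0 with a ≠ b, (3/(2π))·C̄(a,b) + (1 - 3/(2π))·H(a,b) < P(a,b) < (5/8)·C̄(a,b) + (3/8)·H(a,b), and the constants 3/(2π) and 5/8 are best possible. -/

import Mathlib

open Real

noncomputable def Amean (a b : ℝ) : ℝ := (a + b) / 2
noncomputable def Gmean (a b : ℝ) : ℝ := Real.sqrt (a * b)
noncomputable def Hmean (a b : ℝ) : ℝ := 2 * a * b / (a + b)
noncomputable def Cmean (a b : ℝ) : ℝ := (a ^ 2 + b ^ 2) / (a + b)
noncomputable def Cbar (a b : ℝ) : ℝ := 2 * (a ^ 2 + a * b + b ^ 2) / (3 * (a + b))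
noncomputable def Smean (a b : ℝ) : ℝ := Real.sqrt ((a ^ 2 + b ^ 2) / 2)
noncomputable def Pmean (a b : ℝ) : ℝ := (a - b) / (2 * Real.arcsin ((a - b) / (a + b)))
noncomputable def Tmean (a b : ℝ) : ℝ := (a - b) / (2 * Real.arctan ((a - b) / (a + b)))

/-!
With `s = (a + b) / 2` and `t = (a - b) / (a + b) ∈ (-1, 1)` one has
`γ C̄ + (1 - γ) H = s (1 + (4γ - 3)/3 · t²)` and `P = s · t / arcsin t`, so everything is a
statement about the even function `t / arcsin t` on `(0, 1)`. Writing `t = sin x`, the bound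
`t / arcsin t < 1 - t² / 6` follows from Cusa's inequality `3 sin x < x (2 + cos x)`, and
`1 - (1 - 2/π) t² < t / arcsin t` from `x - x³/6 ≤ sin x` for `x ≤ 5/4` and from
`1 - y²/2 ≤ cos y` at `y = π/2 - x` beyond. The constants are best possible because
`(1 - t / arcsin t) / t²` tends to `1/6` as `t → 0` and to `1 - 2/π` as `t → 1`.
-/

open Filter Topology Set

namespace Real

lemma mul_cos_lt_sin {x : ℝ} (hx₀ : 0 < x) (hx : x < π / 2) : x * cos x < sin x := by
  have hcos : 0 < cos x := cos_pos_of_mem_Ioo ⟨by linarith, hx⟩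
  have h := lt_tan hx₀ hx
  rwa [tan_eq_sin_div_cos, lt_div_iff₀ hcos] at h

lemma mul_sin_lt_two_sub_two_mul_cos {x : ℝ} (hx₀ : 0 < x) (hx : x < π) :
    x * sin x < 2 - 2 * cos x := by
  -- halve the angle: the claim becomes `4 sin (x/2) * ((x/2) cos (x/2)) < 4 sin (x/2) * sin (x/2)`
  have hs : 0 < sin (x / 2) := sin_pos_of_pos_of_lt_pi (by linarith) (by linarith)
  have h := mul_lt_mul_of_pos_left (mul_cos_lt_sin (x := x / 2) (by linarith) (by linarith))
    (by positivity : 0 < 4 * sin (x / 2))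
  have hsin : sin x = 2 * sin (x / 2) * cos (x / 2) := by rw [← sin_two_mul]; ring_nf
  have hcos : cos x = 2 * cos (x / 2) ^ 2 - 1 := by rw [← cos_two_mul]; ring_nf
  nlinarith [sin_sq_add_cos_sq (x / 2)]

/-- Cusa's inequality. -/
lemma three_mul_sin_lt {x : ℝ} (hx₀ : 0 < x) (hx : x ≤ π) : 3 * sin x < x * (2 + cos x) := by
  let f : ℝ → ℝ := fun y => y * (2 + cos y) - 3 * sin y
  have hf : StrictMonoOn f (Icc 0 π) := by
    refine strictMonoOn_of_deriv_pos (convex_Icc 0 π) (by fun_prop) fun y hy => ?_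
    rw [interior_Icc] at hy
    have hd : HasDerivAt f (2 - 2 * cos y - y * sin y) y :=
      (((hasDerivAt_id' y).mul ((hasDerivAt_cos y).const_add 2)).sub
        ((hasDerivAt_sin y).const_mul 3)).congr_deriv (by ring)
    rw [hd.deriv]
    linarith [mul_sin_lt_two_sub_two_mul_cos hy.1 hy.2]
  have h := hf (left_mem_Icc.2 pi_pos.le) ⟨hx₀.le, hx⟩ hx₀
  simp only [f, zero_mul, sin_zero, mul_zero, sub_zero] at h
  linarith

lemma sin_div_lt_one_sub_sin_sq_div_six {x : ℝ} (hx₀ : 0 < x) (hx : x ≤ π) :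
    sin x / x < 1 - sin x ^ 2 / 6 := by
  rw [div_lt_iff₀ hx₀]
  nlinarith [three_mul_sin_lt hx₀ hx, congrArg (x * ·) (sin_sq_add_cos_sq x),
    mul_nonneg hx₀.le (sq_nonneg (1 - cos x))]

lemma lt_sin_add_mul_sin_sq_of_le {x : ℝ} (hx₀ : 0 < x) (hx : x ≤ 5 / 4) :
    x < sin x + (1 - 2 / π) * x * sin x ^ 2 := by
  have hk : 1 - 2 / 3.14 < 1 - 2 / π := by gcongr; exact pi_gt_d2
  set q := 1 - x ^ 2 / 6 with hq
  have hq₀ : 71 / 96 ≤ q := by nlinarith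
  have hxq : x * q ≤ sin x := by rw [hq]; linarith [sin_ge_sub_cube hx₀.le]
  have hsq : (x * q) ^ 2 ≤ sin x ^ 2 := pow_le_pow_left₀ (by positivity) hxq 2
  have hkq : 1 / 6 < (1 - 2 / π) * q ^ 2 := by nlinarith
  nlinarith [mul_lt_mul_of_pos_left hkq (by positivity : 0 < x ^ 3),
    mul_le_mul_of_nonneg_left hsq (by positivity : 0 ≤ (1 - 2 / π) * x)]

lemma lt_sin_add_mul_sin_sq_of_ge {x : ℝ} (hx₀ : 5 / 4 ≤ x) (hx : x < π / 2) :
    x < sin x + (1 - 2 / π) * x * sin x ^ 2 := by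
  set y := π / 2 - x with hy
  have hy₀ : 0 < y := by linarith
  have hsin : 1 - y ^ 2 / 2 ≤ sin x := by
    rw [← cos_pi_div_two_sub]; exact one_sub_sq_div_two_le_cos
  have hcos : cos x ^ 2 ≤ y ^ 2 := by
    rw [← sin_pi_div_two_sub]; exact sin_sq_le_sq
  have hsin_sq : 1 - y ^ 2 ≤ sin x ^ 2 := by linarith [sin_sq_add_cos_sq x]
  set k := 1 - 2 / π with hk
  have hkπ : k * π = π - 2 := by rw [hk]; field_simp
  have hk₀ : 0 < k := by rw [hk, sub_pos, div_lt_one pi_pos]; linarith [pi_gt_three]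
  have hk₁ : k < 1 / 2 := by rw [hk, sub_lt_comm, lt_div_iff₀ pi_pos]; linarith [pi_lt_four]
  have hbound : x - sin x - k * x * sin x ^ 2 ≤ -(1 - k) * y + (π - 1) / 2 * y ^ 2 - k * y ^ 3 := by
    have := mul_le_mul_of_nonneg_left hsin_sq (by positivity : 0 ≤ k * x)
    linear_combination this + hsin + (y ^ 2 - 1) / 2 * hkπ
  have hy_small : (π - 1) / 2 * y < 1 / 2 := by nlinarith [pi_lt_d2]
  nlinarith [mul_lt_mul_of_pos_left hy_small hy₀, pow_pos hy₀ 3]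

lemma one_sub_mul_sin_sq_lt_sin_div {x : ℝ} (hx₀ : 0 < x) (hx : x < π / 2) :
    1 - (1 - 2 / π) * sin x ^ 2 < sin x / x := by
  have h : x < sin x + (1 - 2 / π) * x * sin x ^ 2 :=
    (le_or_gt x (5 / 4)).elim (lt_sin_add_mul_sin_sq_of_le hx₀) (fun h => lt_sin_add_mul_sin_sq_of_ge h.le hx)
  rw [lt_div_iff₀ hx₀]
  linarith

lemma div_arcsin_lt {t : ℝ} (ht₀ : 0 < t) (ht : t ≤ 1) : t / arcsin t < 1 - t ^ 2 / 6 := by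
  have hx : arcsin t ≤ π := (arcsin_le_pi_div_two t).trans (by linarith [pi_pos])
  simpa only [sin_arcsin (by linarith) ht] using
    sin_div_lt_one_sub_sin_sq_div_six (arcsin_pos.2 ht₀) hx

lemma one_sub_mul_sq_lt_div_arcsin {t : ℝ} (ht₀ : 0 < t) (ht : t < 1) :
    1 - (1 - 2 / π) * t ^ 2 < t / arcsin t := by
  simpa only [sin_arcsin (by linarith) ht.le] using
    one_sub_mul_sin_sq_lt_sin_div (arcsin_pos.2 ht₀) (arcsin_lt_pi_div_two.2 ht)

lemma abs_div_arcsin_abs (t : ℝ) : |t| / arcsin |t| = t / arcsin t := by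
  rcases le_total 0 t with h | h
  · rw [abs_of_nonneg h]
  · rw [abs_of_nonpos h, arcsin_neg, neg_div_neg_eq]

lemma le_of_forall_one_add_mul_sq_lt_div_arcsin {c : ℝ}
    (h : ∀ t, 0 < t → t < 1 → 1 + c * t ^ 2 < t / arcsin t) : c ≤ 2 / π - 1 := by
  have hcont : ContinuousAt (fun t => t / arcsin t) 1 :=
    continuousAt_id.div continuous_arcsin.continuousAt (by simp [arcsin_one, pi_ne_zero])
  have hlim : Tendsto (fun t => t / arcsin t) (𝓝[<] 1) (𝓝 (2 / π)) := by
    convert hcont.tendsto.mono_left nhdsWithin_le_nhds using 2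
    rw [arcsin_one]; ring
  have hlim' : Tendsto (fun t : ℝ => 1 + c * t ^ 2) (𝓝[<] 1) (𝓝 (1 + c)) := by
    have hc : Continuous fun t : ℝ => 1 + c * t ^ 2 := by fun_prop
    simpa using (hc.tendsto 1).mono_left nhdsWithin_le_nhds
  have := le_of_tendsto_of_tendsto hlim' hlim <| by
    filter_upwards [Ioo_mem_nhdsLT one_pos] with t ht using (h t ht.1 ht.2).le
  linarith

lemma neg_one_div_six_le_of_forall_div_arcsin_lt {c : ℝ}
    (h : ∀ t, 0 < t → t < 1 → t / arcsin t < 1 + c * t ^ 2) : -(1 / 6) ≤ c := by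
  -- at `t = sin x`, compare with `x - x ^ 3 / 6 ≤ sin x` and let `x → 0`
  have hev : ∀ᶠ x in 𝓝[>] 0, -(1 / 6) < c * sinc x ^ 2 := by
    filter_upwards [Ioo_mem_nhdsGT one_pos] with x ⟨hx₀, hx⟩
    have hs₀ : 0 < sin x := sin_pos_of_pos_of_lt_pi hx₀ (by linarith [pi_gt_three])
    have hP := h (sin x) hs₀ ((sin_lt hx₀).trans hx)
    rw [arcsin_sin (by linarith [pi_pos]) (by linarith [pi_gt_three]), div_lt_iff₀ hx₀] at hP
    rw [sinc_of_ne_zero hx₀.ne', div_pow, mul_div_assoc', lt_div_iff₀ (by positivity)]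
    nlinarith [sin_ge_sub_cube hx₀.le]
  have hlim : Tendsto (fun x => c * sinc x ^ 2) (𝓝[>] 0) (𝓝 c) := by
    have hc : Continuous fun x => c * sinc x ^ 2 := continuous_const.mul (continuous_sinc.pow 2)
    simpa using (hc.tendsto 0).mono_left nhdsWithin_le_nhds
  exact ge_of_tendsto hlim (hev.mono fun _ => le_of_lt)

theorem forall_one_add_mul_sq_lt_div_arcsin_iff {c : ℝ} :
    (∀ t, 0 < t → t < 1 → 1 + c * t ^ 2 < t / arcsin t) ↔ c ≤ 2 / π - 1 := by
  refine ⟨le_of_forall_one_add_mul_sq_lt_div_arcsin, fun hc t ht₀ ht => ?_⟩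
  have := mul_le_mul_of_nonneg_right hc (sq_nonneg t)
  linarith [one_sub_mul_sq_lt_div_arcsin ht₀ ht]

theorem forall_div_arcsin_lt_one_add_mul_sq_iff {c : ℝ} :
    (∀ t, 0 < t → t < 1 → t / arcsin t < 1 + c * t ^ 2) ↔ -(1 / 6) ≤ c := by
  refine ⟨neg_one_div_six_le_of_forall_div_arcsin_lt, fun hc t ht₀ ht => ?_⟩
  have := mul_le_mul_of_nonneg_right hc (sq_nonneg t)
  linarith [div_arcsin_lt ht₀ ht.le]

end Real

lemma mul_cbar_add_mul_hmean_eq {a b : ℝ} (h : a + b ≠ 0) (γ : ℝ) :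
    γ * Cbar a b + (1 - γ) * Hmean a b
      = (a + b) / 2 * (1 + (4 * γ - 3) / 3 * ((a - b) / (a + b)) ^ 2) := by
  unfold Cbar Hmean
  field_simp
  ring

lemma pmean_eq {a b : ℝ} (h : a + b ≠ 0) :
    Pmean a b = (a + b) / 2 * ((a - b) / (a + b) / arcsin ((a - b) / (a + b))) := by
  unfold Pmean
  field_simp

lemma pmean_one_add_one_sub (t : ℝ) : Pmean (1 + t) (1 - t) = t / arcsin t := by
  rw [pmean_eq (by norm_num)]
  ring_nf

lemma mul_cbar_add_mul_hmean_one_add_one_sub (t γ : ℝ) :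
    γ * Cbar (1 + t) (1 - t) + (1 - γ) * Hmean (1 + t) (1 - t) = 1 + (4 * γ - 3) / 3 * t ^ 2 := by
  rw [mul_cbar_add_mul_hmean_eq (by norm_num)]
  ring_nf

lemma exists_pmean_eq_and_mul_cbar_add_mul_hmean_eq {a b : ℝ} (ha : 0 < a) (hb : 0 < b)
    (hab : a ≠ b) : ∃ s > 0, ∃ t ∈ Ioo (0 : ℝ) 1, Pmean a b = s * (t / arcsin t) ∧
      ∀ γ, γ * Cbar a b + (1 - γ) * Hmean a b = s * (1 + (4 * γ - 3) / 3 * t ^ 2) := by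
  have hpos : 0 < a + b := add_pos ha hb
  refine ⟨(a + b) / 2, by positivity, |(a - b) / (a + b)|, ⟨?_, ?_⟩, ?_, fun γ => ?_⟩
  · exact abs_pos.2 (div_ne_zero (sub_ne_zero.2 hab) hpos.ne')
  · rw [abs_div, abs_of_pos hpos, div_lt_one hpos, abs_lt]
    constructor <;> linarith
  · rw [abs_div_arcsin_abs, pmean_eq hpos.ne']
  · rw [sq_abs, mul_cbar_add_mul_hmean_eq hpos.ne']

theorem forall_mul_cbar_add_mul_hmean_lt_pmean_iff (γ : ℝ) :
    (∀ a b : ℝ, 0 < a → 0 < b → a ≠ b → γ * Cbar a b + (1 - γ) * Hmean a b < Pmean a b) ↔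
      ∀ t, 0 < t → t < 1 → 1 + (4 * γ - 3) / 3 * t ^ 2 < t / arcsin t := by
  refine ⟨fun h t ht₀ ht => ?_, fun h a b ha hb hab => ?_⟩
  · simpa only [mul_cbar_add_mul_hmean_one_add_one_sub, pmean_one_add_one_sub] using
      h (1 + t) (1 - t) (by linarith) (by linarith) (by linarith)
  · obtain ⟨s, hs, t, ⟨ht₀, ht⟩, hP, hM⟩ :=
      exists_pmean_eq_and_mul_cbar_add_mul_hmean_eq ha hb hab
    rw [hP, hM]
    exact mul_lt_mul_of_pos_left (h t ht₀ ht) hs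

theorem forall_pmean_lt_mul_cbar_add_mul_hmean_iff (γ : ℝ) :
    (∀ a b : ℝ, 0 < a → 0 < b → a ≠ b → Pmean a b < γ * Cbar a b + (1 - γ) * Hmean a b) ↔
      ∀ t, 0 < t → t < 1 → t / arcsin t < 1 + (4 * γ - 3) / 3 * t ^ 2 := by
  refine ⟨fun h t ht₀ ht => ?_, fun h a b ha hb hab => ?_⟩
  · simpa only [mul_cbar_add_mul_hmean_one_add_one_sub, pmean_one_add_one_sub] using
      h (1 + t) (1 - t) (by linarith) (by linarith) (by linarith)
  · obtain ⟨s, hs, t, ⟨ht₀, ht⟩, hP, hM⟩ :=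
      exists_pmean_eq_and_mul_cbar_add_mul_hmean_eq ha hb hab
    rw [hP, hM]
    exact mul_lt_mul_of_pos_left (h t ht₀ ht) hs

theorem sharp_stmt_14 :
    (∀ a b : ℝ, 0 < a → 0 < b → a ≠ b →
        (3 / (2 * Real.pi)) * Cbar a b + (1 - (3 / (2 * Real.pi))) * Hmean a b < Pmean a b ∧
        Pmean a b < (5 / 8) * Cbar a b + (1 - (5 / 8)) * Hmean a b) ∧
    (∀ α : ℝ, (∀ a b : ℝ, 0 < a → 0 < b → a ≠ b →
        α * Cbar a b + (1 - α) * Hmean a b < Pmean a b) ↔ α ≤ (3 / (2 * Real.pi))) ∧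
    (∀ β : ℝ, (∀ a b : ℝ, 0 < a → 0 < b → a ≠ b →
        Pmean a b < β * Cbar a b + (1 - β) * Hmean a b) ↔ β ≥ (5 / 8)) := by
  have hα : ∀ α : ℝ, (∀ a b : ℝ, 0 < a → 0 < b → a ≠ b →
      α * Cbar a b + (1 - α) * Hmean a b < Pmean a b) ↔ α ≤ 3 / (2 * π) := fun α => by
    rw [forall_mul_cbar_add_mul_hmean_lt_pmean_iff, forall_one_add_mul_sq_lt_div_arcsin_iff]
    have : 3 / (2 * π) = 3 / 4 * (2 / π) := by ring
    constructor <;> intro <;> linarith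
  have hβ : ∀ β : ℝ, (∀ a b : ℝ, 0 < a → 0 < b → a ≠ b →
      Pmean a b < β * Cbar a b + (1 - β) * Hmean a b) ↔ β ≥ 5 / 8 := fun β => by
    rw [forall_pmean_lt_mul_cbar_add_mul_hmean_iff, forall_div_arcsin_lt_one_add_mul_sq_iff]
    constructor <;> intro <;> linarith
  exact ⟨fun a b ha hb hab => ⟨(hα _).2 le_rfl a b ha hb hab, (hβ _).2 le_rfl a b ha hb hab⟩,
    hα, hβ⟩
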